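/- Let U be a Hopf algebra over a field k with comultiplication Δ, counit ε, antipode S, and let K ∈ U be an invertible element with Δ(K) = K ⊗ K and S²(x) = K x K⁻¹ for all x ∈ U. Let B, B' ⊆ U be right coideal subalgebras, V a finite-dimensional B-module, W a B'-module, Φ : U → Hom_k(W, V) a matrix-spherical function in E^{V,W}, Ψ : U → Hom_k(V, W) a matrix-spherical function in E^{W,V}, and f, g : U → k zonal spherical functions. With Ξ(Φ, Ψ)(x) = Σ tr_V( Φ(x₍₁₎) ∘ Ψ(S(x₍₂₎) · K) ), one has, for all x ∈ U: Ξ(f * Φ, g * Ψ)(x) = Σ f(x₍₁₎) · Ξ(Φ, Ψ)(x₍₂₎) · g(S(x₍₃₎) · K); equivalently, Ξ(f * Φ, g * Ψ) = f * Ξ(Φ, Ψ) * g', where g'(y) := g(S(y) · K) and * denotes convolution. -/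

import Mathlib

open TensorProduct

/-- `B` is a right coideal subalgebra of the Hopf algebra `U`: `Δ(B) ⊆ B ⊗ U`. -/
def IsRightCoidealSubalgebra (k : Type*) {U : Type*} [CommSemiring k] [Semiring U]
    [Bialgebra k U] (B : Subalgebra k U) : Prop :=
  ∀ b ∈ B, Coalgebra.comul (R := k) b ∈
    LinearMap.range (LinearMap.rTensor U B.toSubmodule.subtype)

/-- `f : U → k` is a zonal spherical function for `(B, B')`. -/
def IsZonalSpherical (k : Type*) {U : Type*} [CommSemiring k] [Semiring U]
    [Bialgebra k U] (B B' : Subalgebra k U) (f : U →ₗ[k] k) : Prop :=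
  ∀ (b : B) (x : U) (b' : B'),
    f ((b : U) * x * (b' : U)) =
      Coalgebra.counit (R := k) (b : U) * f x * Coalgebra.counit (R := k) (b' : U)

/-- Convolution `(f * Φ)(x) = Σ f(x₍₁₎) Φ(x₍₂₎)` of a scalar functional with an
`M`-valued linear map. -/
noncomputable def convL (k : Type*) {U : Type*} [CommSemiring k] [Semiring U]
    [Bialgebra k U] {M : Type*} [AddCommMonoid M] [Module k M]
    (f : U →ₗ[k] k) (Φ : U →ₗ[k] M) : U →ₗ[k] M :=
  (TensorProduct.lid k M).toLinearMap ∘ₗ (TensorProduct.map f Φ) ∘ₗ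
    Coalgebra.comul (R := k)

/-- Convolution `(Φ * g)(x) = Σ Φ(x₍₁₎) g(x₍₂₎)` of an `M`-valued linear map with a
scalar functional. -/
noncomputable def convR (k : Type*) {U : Type*} [CommSemiring k] [Semiring U]
    [Bialgebra k U] {M : Type*} [AddCommMonoid M] [Module k M]
    (Φ : U →ₗ[k] M) (g : U →ₗ[k] k) : U →ₗ[k] M :=
  (TensorProduct.rid k M).toLinearMap ∘ₗ (TensorProduct.map Φ g) ∘ₗ
    Coalgebra.comul (R := k)

/-- The pairing `Ξ(Φ, Ψ)(x) = Σ tr_V( Φ(x₍₁₎) ∘ Ψ(S(x₍₂₎) · K) )`. -/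
noncomputable def XiPairing {k U : Type*} [Field k] [Ring U] [HopfAlgebra k U]
    {V W : Type*} [AddCommGroup V] [Module k V] [AddCommGroup W] [Module k W]
    (Φ : U →ₗ[k] (W →ₗ[k] V)) (Ψ : U →ₗ[k] (V →ₗ[k] W)) (K : U) : U →ₗ[k] k :=
  (LinearMap.trace k V) ∘ₗ
    (TensorProduct.lift (LinearMap.llcomp k V W V)) ∘ₗ
    (TensorProduct.map Φ
      (Ψ ∘ₗ (LinearMap.mulRight k K) ∘ₗ HopfAlgebra.antipode (R := k))) ∘ₗ
    Coalgebra.comul (R := k)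


open Coalgebra LinearMap in
section
end



namespace XiAux
open Coalgebra LinearMap

variable {k C A : Type*} [CommSemiring k] [AddCommMonoid C] [Module k C] [Coalgebra k C]
  [Semiring A] [Algebra k A]

/-- Convolution product of two maps from a coalgebra to an algebra. -/
noncomputable def aconv (φ ψ : C →ₗ[k] A) : C →ₗ[k] A :=
  LinearMap.mul' k A ∘ₗ TensorProduct.map φ ψ ∘ₗ Coalgebra.comul (R := k)

lemma aconv_repr (φ ψ : C →ₗ[k] A) {x : C} {ι : Type*} (r : Coalgebra.Repr k x ι) :
    aconv φ ψ x = ∑ i ∈ r.index, φ (r.left i) * ψ (r.right i) := by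
  simp only [aconv, comp_apply]
  rw [← r.eq]
  simp [LinearMap.mul'_apply]

lemma sum_counit_smul {x : C} {ι : Type*} (r : Coalgebra.Repr k x ι) :
    ∑ i ∈ r.index, Coalgebra.counit (R := k) (r.left i) • r.right i = x := by
  calc ∑ i ∈ r.index, Coalgebra.counit (R := k) (r.left i) • r.right i
      = TensorProduct.lid k C
          (∑ i ∈ r.index, Coalgebra.counit (R := k) (r.left i) ⊗ₜ[k] r.right i) := by
        rw [map_sum]; simp
    _ = TensorProduct.lid k C ((1 : k) ⊗ₜ[k] x) := by
        rw [Coalgebra.sum_counit_tmul_eq r]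
    _ = x := by simp

lemma sum_smul_counit {x : C} {ι : Type*} (r : Coalgebra.Repr k x ι) :
    ∑ i ∈ r.index, Coalgebra.counit (R := k) (r.right i) • r.left i = x := by
  calc ∑ i ∈ r.index, Coalgebra.counit (R := k) (r.right i) • r.left i
      = TensorProduct.rid k C
          (∑ i ∈ r.index, r.left i ⊗ₜ[k] Coalgebra.counit (R := k) (r.right i)) := by
        rw [map_sum]; simp
    _ = TensorProduct.rid k C (x ⊗ₜ[k] (1 : k)) := by
        rw [Coalgebra.sum_tmul_counit_eq r]
    _ = x := by simp

/-- Convolution unit. -/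
noncomputable def aone : C →ₗ[k] A :=
  Algebra.linearMap k A ∘ₗ Coalgebra.counit (R := k)

lemma aconv_aone_left (φ : C →ₗ[k] A) : aconv (aone) φ = φ := by
  ext x
  set r := ℛ k x with hr
  rw [aconv_repr _ _ r]
  calc ∑ i ∈ r.index, aone (r.left i) * φ (r.right i)
      = ∑ i ∈ r.index, Coalgebra.counit (R := k) (r.left i) • φ (r.right i) := by
        simp [aone, Algebra.smul_def]
    _ = φ (∑ i ∈ r.index, Coalgebra.counit (R := k) (r.left i) • r.right i) := by
        simp [map_sum]
    _ = φ x := by rw [sum_counit_smul]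

lemma aconv_aone_right (φ : C →ₗ[k] A) : aconv φ (aone) = φ := by
  ext x
  set r := ℛ k x with hr
  rw [aconv_repr _ _ r]
  calc ∑ i ∈ r.index, φ (r.left i) * aone (r.right i)
      = ∑ i ∈ r.index, Coalgebra.counit (R := k) (r.right i) • φ (r.left i) := by
        simp only [aone, comp_apply, Algebra.linearMap_apply]
        refine Finset.sum_congr rfl fun i _ => ?_
        rw [← Algebra.commutes, Algebra.smul_def]
    _ = φ (∑ i ∈ r.index, Coalgebra.counit (R := k) (r.right i) • r.left i) := by
        simp [map_sum]
    _ = φ x := by rw [sum_smul_counit]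

lemma aconv_assoc (φ ψ χ : C →ₗ[k] A) :
    aconv (aconv φ ψ) χ = aconv φ (aconv ψ χ) := by
  ext x
  set r := ℛ k x with hr
  set a : ∀ i, Coalgebra.Repr k (r.left i) (C × C) := fun i => ℛ k (r.left i) with ha
  set c : ∀ i, Coalgebra.Repr k (r.right i) (C × C) := fun i => ℛ k (r.right i) with hc
  have key := congrArg (LinearMap.mul' k A ∘ₗ
      TensorProduct.map φ (LinearMap.mul' k A ∘ₗ TensorProduct.map ψ χ))
    (Coalgebra.sum_tmul_tmul_eq (R := k) r a c)
  simp only [map_sum, comp_apply, TensorProduct.map_tmul, LinearMap.mul'_apply] at key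
  rw [aconv_repr _ _ r, aconv_repr _ _ r]
  calc ∑ i ∈ r.index, aconv φ ψ (r.left i) * χ (r.right i)
      = ∑ i ∈ r.index, ∑ j ∈ (a i).index,
          φ ((a i).left j) * (ψ ((a i).right j) * χ (r.right i)) := by
        refine Finset.sum_congr rfl fun i _ => ?_
        rw [aconv_repr _ _ (a i), Finset.sum_mul]
        simp [mul_assoc]
    _ = ∑ i ∈ r.index, ∑ j ∈ (c i).index,
          φ (r.left i) * (ψ ((c i).left j) * χ ((c i).right j)) := key
    _ = ∑ i ∈ r.index, φ (r.left i) * aconv ψ χ (r.right i) := by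
        refine Finset.sum_congr rfl fun i _ => ?_
        rw [aconv_repr _ _ (c i), Finset.mul_sum]


section Hopf
variable {k U : Type*} [CommSemiring k] [Semiring U] [HopfAlgebra k U]

local notation "𝒮" => HopfAlgebra.antipode (R := k) (A := U)

/-- `W (p ⊗ (q ⊗ c)) = (S q ⊗ S p) * Δ c` in `U ⊗ U`. -/
noncomputable def Wmap : U ⊗[k] (U ⊗[k] U) →ₗ[k] U ⊗[k] U :=
  LinearMap.mul' k (U ⊗[k] U) ∘ₗ
    TensorProduct.map ((TensorProduct.comm k U U).toLinearMap ∘ₗ TensorProduct.map 𝒮 𝒮)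
      (Coalgebra.comul (R := k)) ∘ₗ
    (TensorProduct.assoc k U U U).symm.toLinearMap

lemma Wmap_tmul (p q c : U) :
    Wmap (p ⊗ₜ[k] (q ⊗ₜ[k] c)) = (𝒮 q ⊗ₜ[k] 𝒮 p) * Coalgebra.comul (R := k) c := by
  simp [Wmap, LinearMap.mul'_apply]

lemma Wmap_comul (p y : U) :
    Wmap (p ⊗ₜ[k] Coalgebra.comul (R := k) y) = (1 : U) ⊗ₜ[k] (𝒮 p * y) := by
  set r := ℛ k y with hry
  set b : ∀ i, Coalgebra.Repr k (r.left i) (U × U) := fun i => ℛ k (r.left i) with hb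
  set c : ∀ i, Coalgebra.Repr k (r.right i) (U × U) := fun i => ℛ k (r.right i) with hc
  set Z : U ⊗[k] (U ⊗[k] U) →ₗ[k] U ⊗[k] U :=
    TensorProduct.map (LinearMap.mul' k U ∘ₗ LinearMap.rTensor U 𝒮)
        (LinearMap.mulLeft k (𝒮 p)) ∘ₗ
      (TensorProduct.assoc k U U U).symm.toLinearMap with hZ
  have hZt : ∀ a u v : U, Z (a ⊗ₜ[k] (u ⊗ₜ[k] v)) = (𝒮 a * u) ⊗ₜ[k] (𝒮 p * v) := by
    intro a u v
    simp [hZ, LinearMap.mul'_apply]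
  have key := congrArg Z (Coalgebra.sum_tmul_tmul_eq (R := k) r b c)
  simp only [map_sum, hZt] at key
  have step1 : ∀ i ∈ r.index,
      ∑ j ∈ (b i).index, (𝒮 ((b i).left j) * (b i).right j) ⊗ₜ[k] (𝒮 p * r.right i)
        = (1 : U) ⊗ₜ[k] (𝒮 p * (Coalgebra.counit (R := k) (r.left i) • r.right i)) := by
    intro i _
    rw [← TensorProduct.sum_tmul, HopfAlgebra.sum_antipode_mul_eq_smul (b i),
      TensorProduct.smul_tmul, mul_smul_comm]
  have lhs : ∑ i ∈ r.index, ∑ j ∈ (b i).index,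
      (𝒮 ((b i).left j) * (b i).right j) ⊗ₜ[k] (𝒮 p * r.right i)
      = (1 : U) ⊗ₜ[k] (𝒮 p * y) := by
    rw [Finset.sum_congr rfl step1, ← TensorProduct.tmul_sum, ← Finset.mul_sum,
      sum_counit_smul r]
  have rhs : Wmap (p ⊗ₜ[k] Coalgebra.comul (R := k) y)
      = ∑ i ∈ r.index, ∑ j ∈ (c i).index,
        (𝒮 (r.left i) * (c i).left j) ⊗ₜ[k] (𝒮 p * (c i).right j) := by
    rw [← r.eq, TensorProduct.tmul_sum, map_sum]
    refine Finset.sum_congr rfl fun i _ => ?_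
    rw [Wmap_tmul, ← (c i).eq, Finset.mul_sum]
    refine Finset.sum_congr rfl fun j _ => ?_
    rw [Algebra.TensorProduct.tmul_mul_tmul]
  rw [rhs, ← key, lhs]

/-- The antipode is an anti-coalgebra morphism. -/
lemma comul_comp_antipode :
    (Coalgebra.comul (R := k) (A := U)) ∘ₗ 𝒮 =
      (TensorProduct.comm k U U).toLinearMap ∘ₗ TensorProduct.map 𝒮 𝒮 ∘ₗ
        Coalgebra.comul (R := k) := by
  set T1 : U →ₗ[k] U ⊗[k] U := (Coalgebra.comul (R := k) (A := U)) ∘ₗ 𝒮 with hT1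
  set T2 : U →ₗ[k] U ⊗[k] U :=
    (TensorProduct.comm k U U).toLinearMap ∘ₗ TensorProduct.map 𝒮 𝒮 ∘ₗ
      Coalgebra.comul (R := k) with hT2
  set D : U →ₗ[k] U ⊗[k] U := Coalgebra.comul (R := k) with hD
  have h1 : aconv D T1 = aone := by
    ext x
    set r := ℛ k x with hr
    rw [aconv_repr _ _ r]
    have : ∀ i ∈ r.index, D (r.left i) * T1 (r.right i)
        = Coalgebra.comul (R := k) (r.left i * 𝒮 (r.right i)) := by
      intro i _
      rw [Bialgebra.comul_mul]; rfl
    rw [Finset.sum_congr rfl this, ← map_sum,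
      HopfAlgebra.sum_mul_antipode_eq_smul r, map_smul, Bialgebra.comul_one]
    simp [aone, Algebra.smul_def]
  have h2 : aconv T2 D = aone := by
    ext x
    set r := ℛ k x with hr
    set a : ∀ i, Coalgebra.Repr k (r.left i) (U × U) := fun i => ℛ k (r.left i) with ha
    set c : ∀ i, Coalgebra.Repr k (r.right i) (U × U) := fun i => ℛ k (r.right i) with hc
    rw [aconv_repr _ _ r]
    have expand : ∀ i ∈ r.index, T2 (r.left i) * D (r.right i)
        = ∑ j ∈ (a i).index,
            Wmap ((a i).left j ⊗ₜ[k] ((a i).right j ⊗ₜ[k] r.right i)) := by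
      intro i _
      have : T2 (r.left i) = ∑ j ∈ (a i).index,
          𝒮 ((a i).right j) ⊗ₜ[k] 𝒮 ((a i).left j) := by
        simp only [hT2, LinearMap.comp_apply]
        rw [← (a i).eq]
        simp
      rw [this, Finset.sum_mul]
      refine Finset.sum_congr rfl fun j _ => ?_
      rw [Wmap_tmul]
    rw [Finset.sum_congr rfl expand]
    have key := congrArg Wmap (Coalgebra.sum_tmul_tmul_eq (R := k) r a c)
    simp only [map_sum] at key
    rw [key]
    have : ∀ i ∈ r.index, ∑ j ∈ (c i).index,
        Wmap (r.left i ⊗ₜ[k] ((c i).left j ⊗ₜ[k] (c i).right j))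
        = (1 : U) ⊗ₜ[k] (𝒮 (r.left i) * r.right i) := by
      intro i _
      rw [← map_sum, ← TensorProduct.tmul_sum, (c i).eq, Wmap_comul]
    rw [Finset.sum_congr rfl this, ← TensorProduct.tmul_sum,
      HopfAlgebra.sum_antipode_mul_eq_smul r]
    rw [TensorProduct.tmul_smul]
    simp [aone, Algebra.smul_def, Algebra.TensorProduct.one_def]
  calc T1 = aconv aone T1 := (aconv_aone_left T1).symm
    _ = aconv (aconv T2 D) T1 := by rw [h2]
    _ = aconv T2 (aconv D T1) := aconv_assoc T2 D T1
    _ = aconv T2 aone := by rw [h1]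
    _ = T2 := aconv_aone_right T2

lemma comul_antipode_apply (y : U) :
    Coalgebra.comul (R := k) (𝒮 y) =
      (TensorProduct.comm k U U).toLinearMap
        (TensorProduct.map 𝒮 𝒮 (Coalgebra.comul (R := k) y)) :=
  congrFun (congrArg DFunLike.coe comul_comp_antipode) y

end Hopf

end XiAux



namespace XiAux
open Coalgebra LinearMap

section Conv
variable {k U : Type*} [CommSemiring k] [Semiring U] [Bialgebra k U]
variable {M N P : Type*} [AddCommMonoid M] [Module k M] [AddCommMonoid N] [Module k N]
  [AddCommMonoid P] [Module k P]

lemma convL_repr (f : U →ₗ[k] k) (Φ : U →ₗ[k] M) {x : U} {ι : Type*} (r : Coalgebra.Repr k x ι) :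
    convL k f Φ x = ∑ i ∈ r.index, f (r.left i) • Φ (r.right i) := by
  simp only [convL, comp_apply]
  rw [← r.eq]
  simp

lemma convR_repr (Φ : U →ₗ[k] M) (g : U →ₗ[k] k) {x : U} {ι : Type*} (r : Coalgebra.Repr k x ι) :
    convR k Φ g x = ∑ i ∈ r.index, g (r.right i) • Φ (r.left i) := by
  simp only [convR, comp_apply]
  rw [← r.eq]
  simp

lemma pairing_convL (T : M ⊗[k] N →ₗ[k] P) (f : U →ₗ[k] k) (Φ : U →ₗ[k] M)
    (Ψ : U →ₗ[k] N) :
    T ∘ₗ TensorProduct.map (convL k f Φ) Ψ ∘ₗ Coalgebra.comul (R := k)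
      = convL k f (T ∘ₗ TensorProduct.map Φ Ψ ∘ₗ Coalgebra.comul (R := k)) := by
  ext x
  set r := ℛ k x with hr
  set a : ∀ i, Coalgebra.Repr k (r.left i) (U × U) := fun i => ℛ k (r.left i) with ha
  set c : ∀ i, Coalgebra.Repr k (r.right i) (U × U) := fun i => ℛ k (r.right i) with hc
  set L : U ⊗[k] (U ⊗[k] U) →ₗ[k] P :=
    (TensorProduct.lid k P).toLinearMap ∘ₗ
      TensorProduct.map f (T ∘ₗ TensorProduct.map Φ Ψ) with hL
  have hLt : ∀ u v w : U, L (u ⊗ₜ[k] (v ⊗ₜ[k] w)) = f u • T (Φ v ⊗ₜ[k] Ψ w) := by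
    intro u v w; simp [hL]
  have key := congrArg L (Coalgebra.sum_tmul_tmul_eq (R := k) r a c)
  simp only [map_sum, hLt] at key
  calc (T ∘ₗ TensorProduct.map (convL k f Φ) Ψ ∘ₗ Coalgebra.comul (R := k)) x
      = ∑ i ∈ r.index, T (convL k f Φ (r.left i) ⊗ₜ[k] Ψ (r.right i)) := by
        simp only [comp_apply]
        rw [← r.eq]
        simp
    _ = ∑ i ∈ r.index, ∑ j ∈ (a i).index,
          f ((a i).left j) • T (Φ ((a i).right j) ⊗ₜ[k] Ψ (r.right i)) := by
        refine Finset.sum_congr rfl fun i _ => ?_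
        rw [convL_repr _ _ (a i), TensorProduct.sum_tmul, map_sum]
        refine Finset.sum_congr rfl fun j _ => ?_
        rw [← TensorProduct.smul_tmul', map_smul]
    _ = ∑ i ∈ r.index, ∑ j ∈ (c i).index,
          f (r.left i) • T (Φ ((c i).left j) ⊗ₜ[k] Ψ ((c i).right j)) := key
    _ = convL k f (T ∘ₗ TensorProduct.map Φ Ψ ∘ₗ Coalgebra.comul (R := k)) x := by
        rw [convL_repr _ _ r]
        refine (Finset.sum_congr rfl fun i _ => ?_).symm
        simp only [comp_apply]
        rw [← (c i).eq]
        simp [Finset.smul_sum]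

lemma pairing_convR (T : M ⊗[k] N →ₗ[k] P) (Φ : U →ₗ[k] M) (Ψ : U →ₗ[k] N)
    (g : U →ₗ[k] k) :
    T ∘ₗ TensorProduct.map Φ (convR k Ψ g) ∘ₗ Coalgebra.comul (R := k)
      = convR k (T ∘ₗ TensorProduct.map Φ Ψ ∘ₗ Coalgebra.comul (R := k)) g := by
  ext x
  set r := ℛ k x with hr
  set a : ∀ i, Coalgebra.Repr k (r.left i) (U × U) := fun i => ℛ k (r.left i) with ha
  set c : ∀ i, Coalgebra.Repr k (r.right i) (U × U) := fun i => ℛ k (r.right i) with hc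
  set L : U ⊗[k] (U ⊗[k] U) →ₗ[k] P :=
    T ∘ₗ LinearMap.lTensor M (TensorProduct.rid k N).toLinearMap ∘ₗ
      TensorProduct.map Φ (TensorProduct.map Ψ g) with hL
  have hLt : ∀ u v w : U, L (u ⊗ₜ[k] (v ⊗ₜ[k] w)) = g w • T (Φ u ⊗ₜ[k] Ψ v) := by
    intro u v w
    simp [hL, TensorProduct.smul_tmul, TensorProduct.tmul_smul]
  have key := congrArg L (Coalgebra.sum_tmul_tmul_eq (R := k) r a c)
  simp only [map_sum, hLt] at key
  calc (T ∘ₗ TensorProduct.map Φ (convR k Ψ g) ∘ₗ Coalgebra.comul (R := k)) x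
      = ∑ i ∈ r.index, T (Φ (r.left i) ⊗ₜ[k] convR k Ψ g (r.right i)) := by
        simp only [comp_apply]
        rw [← r.eq]
        simp
    _ = ∑ i ∈ r.index, ∑ j ∈ (c i).index,
          g ((c i).right j) • T (Φ (r.left i) ⊗ₜ[k] Ψ ((c i).left j)) := by
        refine Finset.sum_congr rfl fun i _ => ?_
        rw [convR_repr _ _ (c i), TensorProduct.tmul_sum, map_sum]
        refine Finset.sum_congr rfl fun j _ => ?_
        rw [TensorProduct.tmul_smul, map_smul]
    _ = ∑ i ∈ r.index, ∑ j ∈ (a i).index,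
          g (r.right i) • T (Φ ((a i).left j) ⊗ₜ[k] Ψ ((a i).right j)) := key.symm
    _ = convR k (T ∘ₗ TensorProduct.map Φ Ψ ∘ₗ Coalgebra.comul (R := k)) g x := by
        rw [convR_repr _ _ r]
        refine (Finset.sum_congr rfl fun i _ => ?_).symm
        simp only [comp_apply]
        rw [← (a i).eq]
        simp [Finset.smul_sum]

lemma pairing_conv (T : M ⊗[k] N →ₗ[k] P) (f : U →ₗ[k] k) (Φ : U →ₗ[k] M)
    (Ψ : U →ₗ[k] N) (g : U →ₗ[k] k) :
    T ∘ₗ TensorProduct.map (convL k f Φ) (convR k Ψ g) ∘ₗ Coalgebra.comul (R := k)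
      = convR k (convL k f (T ∘ₗ TensorProduct.map Φ Ψ ∘ₗ Coalgebra.comul (R := k))) g := by
  rw [pairing_convR, pairing_convL]

end Conv

section LemB
variable {k U : Type*} [CommSemiring k] [Semiring U] [HopfAlgebra k U]
variable {N : Type*} [AddCommMonoid N] [Module k N]

local notation "𝒮" => HopfAlgebra.antipode (R := k) (A := U)

lemma convL_comp_mulRight_antipode (K : U)
    (hK : Coalgebra.comul (R := k) K = K ⊗ₜ[k] K) (g : U →ₗ[k] k) (Ψ : U →ₗ[k] N) :
    convL k g Ψ ∘ₗ LinearMap.mulRight k K ∘ₗ 𝒮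
      = convR k (Ψ ∘ₗ LinearMap.mulRight k K ∘ₗ 𝒮)
          (g ∘ₗ LinearMap.mulRight k K ∘ₗ 𝒮) := by
  ext y
  set r := ℛ k y with hr
  have hcom : Coalgebra.comul (R := k) (𝒮 y * K)
      = ∑ i ∈ r.index, (𝒮 (r.right i) * K) ⊗ₜ[k] (𝒮 (r.left i) * K) := by
    rw [Bialgebra.comul_mul, hK, comul_antipode_apply, ← r.eq]
    simp only [map_sum, TensorProduct.map_tmul, TensorProduct.comm_tmul,
      LinearEquiv.coe_coe, Finset.sum_mul, Algebra.TensorProduct.tmul_mul_tmul]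
  calc (convL k g Ψ ∘ₗ LinearMap.mulRight k K ∘ₗ 𝒮) y
      = (TensorProduct.lid k N)
          (TensorProduct.map g Ψ (Coalgebra.comul (R := k) (𝒮 y * K))) := by
        simp [convL]
    _ = ∑ i ∈ r.index, g (𝒮 (r.right i) * K) • Ψ (𝒮 (r.left i) * K) := by
        rw [hcom]
        simp
    _ = (convR k (Ψ ∘ₗ LinearMap.mulRight k K ∘ₗ 𝒮)
          (g ∘ₗ LinearMap.mulRight k K ∘ₗ 𝒮)) y := by
        rw [convR_repr _ _ r]
        simp

end LemB

end XiAux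

/-- For zonal spherical functions `f, g` and matrix-spherical
functions `Φ ∈ E^{V,W}`, `Ψ ∈ E^{W,V}`:
`Ξ(f * Φ, g * Ψ) = f * Ξ(Φ, Ψ) * g'` where `g'(y) = g(S(y)·K)`. -/
theorem XiPairing_convolution
    (k U : Type*) [Field k] [Ring U] [HopfAlgebra k U]
    (K Kinv : U) (hK1 : K * Kinv = 1) (hK2 : Kinv * K = 1)
    (hKgrouplike : Coalgebra.comul (R := k) K = K ⊗ₜ[k] K)
    (hS2 : ∀ x : U,
      HopfAlgebra.antipode (R := k) (HopfAlgebra.antipode (R := k) x) = K * x * Kinv)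
    (B B' : Subalgebra k U)
    (hB : IsRightCoidealSubalgebra k B) (hB' : IsRightCoidealSubalgebra k B')
    (V W : Type*) [AddCommGroup V] [Module k V] [FiniteDimensional k V]
    [AddCommGroup W] [Module k W]
    (ρV : B →ₐ[k] Module.End k V) (ρW : B' →ₐ[k] Module.End k W)
    (Φ : U →ₗ[k] (W →ₗ[k] V))
    (hΦ : ∀ (b : B) (x : U) (b' : B'),
      Φ ((b : U) * x * (b' : U)) = (ρV b) ∘ₗ (Φ x) ∘ₗ (ρW b'))
    (Ψ : U →ₗ[k] (V →ₗ[k] W))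
    (hΨ : ∀ (b' : B') (x : U) (b : B),
      Ψ ((b' : U) * x * (b : U)) = (ρW b') ∘ₗ (Ψ x) ∘ₗ (ρV b))
    (f g : U →ₗ[k] k)
    (hf : IsZonalSpherical k B B' f) (hg : IsZonalSpherical k B B' g) :
    XiPairing (convL k f Φ) (convL k g Ψ) K =
      convR k (convL k f (XiPairing Φ Ψ K))
        (g ∘ₗ (LinearMap.mulRight k K) ∘ₗ HopfAlgebra.antipode (R := k)) := by
  have hB2 := XiAux.convL_comp_mulRight_antipode (k := k) K hKgrouplike g Ψ
  show (LinearMap.trace k V) ∘ₗ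
      (TensorProduct.lift (LinearMap.llcomp k V W V)) ∘ₗ
      (TensorProduct.map (convL k f Φ)
        (convL k g Ψ ∘ₗ (LinearMap.mulRight k K) ∘ₗ HopfAlgebra.antipode (R := k))) ∘ₗ
      Coalgebra.comul (R := k) = _
  rw [hB2, ← LinearMap.comp_assoc]
  exact XiAux.pairing_conv
    ((LinearMap.trace k V) ∘ₗ (TensorProduct.lift (LinearMap.llcomp k V W V))) f Φ
    (Ψ ∘ₗ (LinearMap.mulRight k K) ∘ₗ HopfAlgebra.antipode (R := k))
    (g ∘ₗ (LinearMap.mulRight k K) ∘ₗ HopfAlgebra.antipode (R := k))
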